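/- If every cyclic subgroup of prime power order of a finite group G is F*(G)-conjugate-permutable, then G is nilpotent. -/

import Mathlib

open scoped Pointwise

section Defs

variable {G : Type*} [Group G]

/-- The conjugate `H^x = x⁻¹ H x` of a subgroup `H` of `G`. -/
def conjS (x : G) (H : Subgroup G) : Subgroup G :=
  H.map (MulAut.conj x⁻¹).toMonoidHom

/-- A subgroup `H` of `G` is `R`-conjugate-permutable (for a subset `R ⊆ G`) if
`H · H^x = H^x · H` as subsets of `G`, for all `x ∈ R`. -/
def IsRCP (R : Set G) (H : Subgroup G) : Prop :=
  ∀ x ∈ R, (H : Set G) * (conjS x H : Set G) = (conjS x H : Set G) * (H : Set G)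

/-- A subgroup `H` of `G` is conjugate-permutable if `H · H^x = H^x · H` for all `x ∈ G`. -/
def IsConjPermutable (H : Subgroup G) : Prop :=
  IsRCP (Set.univ : Set G) H

/-- `N` is a minimal normal subgroup of `G`. -/
def IsMinimalNormal (N : Subgroup G) : Prop :=
  N.Normal ∧ N ≠ ⊥ ∧ ∀ K : Subgroup G, K.Normal → K ≤ N → K = ⊥ ∨ K = N

/-- `H` is an abnormal subgroup of `G`: `x ∈ ⟨H, H^x⟩` for all `x ∈ G`. -/
def IsAbnormal (H : Subgroup G) : Prop :=
  ∀ x : G, x ∈ H ⊔ conjS x H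

/-- `H` is normal in the subgroup `K` of `G`. -/
def IsNormalIn (H K : Subgroup G) : Prop :=
  H ≤ K ∧ ∀ x ∈ K, ∀ h ∈ H, x * h * x⁻¹ ∈ H

/-- `H` is subnormal in the subgroup `K`: there is a chain
`H = H₀ ◁ H₁ ◁ ⋯ ◁ Hₙ = K` with each term normal in the next. -/
def IsSubnormalIn (H K : Subgroup G) : Prop :=
  ∃ (n : ℕ) (s : Fin (n + 1) → Subgroup G),
    s 0 = H ∧ s (Fin.last n) = K ∧
    ∀ i : Fin n, s i.castSucc ≤ s i.succ ∧
      ∀ x ∈ s i.succ, ∀ h ∈ s i.castSucc, x * h * x⁻¹ ∈ s i.castSucc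

/-- `H` is pronormal in the subgroup `K`: for every `x ∈ K`, the subgroups `H` and `H^x`
are conjugate in `⟨H, H^x⟩`. -/
def IsPronormalIn (H K : Subgroup G) : Prop :=
  H ≤ K ∧ ∀ x ∈ K, ∃ k ∈ H ⊔ conjS x H, conjS k H = conjS x H

end Defs

/-- The socle of `G`: the subgroup generated by all minimal normal subgroups of `G`. -/
def socle' (G : Type*) [Group G] : Subgroup G :=
  sSup {N : Subgroup G | IsMinimalNormal N}

/-- `F̃(G)`: the subgroup of `G` containing the Frattini subgroup `Φ(G)` with
`F̃(G)/Φ(G) = Soc(G/Φ(G))`. -/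
def Ftilde (G : Type*) [Group G] : Subgroup G :=
  (socle' (G ⧸ frattini G)).comap (QuotientGroup.mk' (frattini G))

/-- The Fitting subgroup `F(G)`: the largest normal nilpotent subgroup of `G`
(the subgroup generated by all normal nilpotent subgroups). -/
def Fitting (G : Type*) [Group G] : Subgroup G :=
  sSup {N : Subgroup G | N.Normal ∧ Group.IsNilpotent N}

section FittingNormal

variable {G : Type*} [Group G]

lemma map_conj_eq_self {N : Subgroup G} (hN : N.Normal) (g : G) :
    N.map (MulAut.conj g).toMonoidHom = N := by
  ext x
  simp only [Subgroup.mem_map, MulEquiv.coe_toMonoidHom, MulAut.conj_apply]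
  constructor
  · rintro ⟨n, hn, rfl⟩; exact hN.conj_mem n hn g
  · intro hx
    refine ⟨g⁻¹ * x * g, by simpa using hN.conj_mem x hx g⁻¹, by group⟩

instance Fitting_normal (G : Type*) [Group G] : (Fitting G).Normal := by
  constructor
  intro n hn g
  have h1 : (Fitting G).map (MulAut.conj g).toMonoidHom = Fitting G := by
    unfold Fitting
    rw [sSup_eq_iSup, Subgroup.map_iSup]
    refine iSup_congr fun N => ?_
    rw [Subgroup.map_iSup]
    exact iSup_congr_Prop Iff.rfl fun hN => map_conj_eq_self hN.1 g
  rw [← h1]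
  exact Subgroup.mem_map.2 ⟨n, hn, rfl⟩

end FittingNormal

/-- The generalized Fitting subgroup `F*(G)`: the subgroup containing `F(G)` with
`F*(G)/F(G) = Soc(C_G(F(G))·F(G)/F(G))`. -/
def FStar (G : Type*) [Group G] : Subgroup G :=
  Subgroup.comap (QuotientGroup.mk' (Fitting G))
    (Subgroup.map
      ((Subgroup.centralizer (Fitting G : Set G) ⊔ Fitting G).map
          (QuotientGroup.mk' (Fitting G))).subtype
      (socle' ((Subgroup.centralizer (Fitting G : Set G) ⊔ Fitting G).map
          (QuotientGroup.mk' (Fitting G)))))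

/-- A group is supersoluble if it has a normal series all of whose terms are
normal in the whole group and all of whose factors are cyclic; the factor
`s (i+1) / s i` being cyclic is expressed by `s (i+1) ≤ s i ⊔ ⟨g⟩` for some `g`. -/
def IsSupersoluble (G : Type*) [Group G] : Prop :=
  ∃ (n : ℕ) (s : Fin (n + 1) → Subgroup G),
    Monotone s ∧ s 0 = ⊥ ∧ s (Fin.last n) = ⊤ ∧ (∀ i, (s i).Normal) ∧
    ∀ i : Fin n, ∃ g : G, s i.succ ≤ s i.castSucc ⊔ Subgroup.zpowers g

/-- A group is metanilpotent if it has a normal nilpotent subgroup with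
nilpotent quotient. -/
def IsMetanilpotent (G : Type*) [Group G] : Prop :=
  ∃ (N : Subgroup G) (hN : N.Normal),
    Group.IsNilpotent N ∧
      @Group.IsNilpotent (G ⧸ N) (@QuotientGroup.Quotient.group G _ N hN)

/-!
Let `K = F*(G)`. Since the `K`-conjugates of a cyclic `p`-subgroup `⟨x⟩ ≤ K` permute pairwise,
they generate a `p`-subgroup normalised by `K`; so every `p`-element of `K` lies in every Sylow
`p`-subgroup of `K`, and `K` is nilpotent. Hence `F*(G) = F(G)`, which forces `C_G(F) ≤ F`.
For a `p`-element `x` and a `q`-element `f ∈ F` with `p ≠ q`, the commutator `[x, f]` lies both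
in the `p`-group `⟨x⟩⟨x⟩^f` and in the `q`-part of `F`, so `x` and `f` commute. Therefore the
centraliser `X` of the `p'`-elements of `F` contains every `p`-element of `G`, and the
`p'`-elements of `X` centralise `F`, hence lie in `F` and are central in `X`. So `X / Z(X)` is a
`p`-group, `X ≤ F`, and `G`, being generated by its elements of prime power order, equals `F`.
-/

open Subgroup

section Permutable

variable {G : Type*} [Group G]

lemma coe_sup_eq_mul_of_mul_comm {A B : Subgroup G} (h : (A : Set G) * B = B * A) :
    ((A ⊔ B : Subgroup G) : Set G) = A * B := by
  let AB : Subgroup G :=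
    { carrier := A * B
      one_mem' := ⟨1, A.one_mem, 1, B.one_mem, mul_one 1⟩
      mul_mem' := fun {x y} hx hy => by
        have hxy := Set.mul_mem_mul hx hy
        rwa [mul_assoc, ← mul_assoc (B : Set G), ← h, mul_assoc, ← mul_assoc, coe_mul_coe,
          coe_mul_coe] at hxy
      inv_mem' := fun {x} hx => by
        have hx' : x⁻¹ ∈ ((A : Set G) * B)⁻¹ := Set.inv_mem_inv.2 hx
        rwa [mul_inv_rev, inv_coe_set, inv_coe_set, ← h] at hx' }
  refine subset_antisymm (sup_le (fun a ha => ⟨a, ha, 1, B.one_mem, mul_one a⟩)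
    (fun b hb => ⟨1, A.one_mem, b, hb, one_mul b⟩) : A ⊔ B ≤ AB) ?_
  rintro _ ⟨a, ha, b, hb, rfl⟩
  exact mul_mem (mem_sup_left ha) (mem_sup_right hb)

lemma coe_sup_mul_comm {A B C : Subgroup G} (hAB : (A : Set G) * B = B * A)
    (hAC : (A : Set G) * C = C * A) (hBC : (B : Set G) * C = C * B) :
    ((A ⊔ B : Subgroup G) : Set G) * C = C * (A ⊔ B : Subgroup G) := by
  rw [coe_sup_eq_mul_of_mul_comm hAB, mul_assoc, hBC, ← mul_assoc, hAC, mul_assoc]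

lemma coe_biSup_mul_comm {ι : Type*} {H : ι → Subgroup G}
    (hcomm : ∀ i j, (H i : Set G) * H j = H j * H i) (s : Finset ι) (j : ι) :
    ((⨆ i ∈ s, H i : Subgroup G) : Set G) * H j = H j * (⨆ i ∈ s, H i : Subgroup G) := by
  classical
  induction s using Finset.induction_on generalizing j with
  | empty => simp
  | insert i s _ ih =>
    rw [Finset.iSup_insert]
    exact coe_sup_mul_comm (ih i).symm (hcomm i j) (ih j)

variable [Finite G]

theorem IsPGroup.sup_of_mul_comm {p : ℕ} [Fact p.Prime] {A B : Subgroup G} (hA : IsPGroup p A)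
    (hB : IsPGroup p B) (h : (A : Set G) * B = B * A) : IsPGroup p (A ⊔ B : Subgroup G) := by
  -- `|AB| = |B| · |A-orbit of the coset B|`, and orbits of a `p`-group have `p`-power size.
  obtain ⟨m, hm⟩ := IsPGroup.iff_card.1 hB
  obtain ⟨n, hn⟩ := hA.card_orbit ((1 : G) : G ⧸ B)
  have horbit : MulAction.orbit A ((1 : G) : G ⧸ B) = (A : Set G).image (↑) := by
    rw [Set.image_eq_range]
    exact congrArg Set.range (funext fun a => congrArg _ (mul_one _))
  refine IsPGroup.of_card (n := m + n) ?_
  calc Nat.card (A ⊔ B : Subgroup G) = Nat.card ((A : Set G) * (B : Set G)) := by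
        rw [← coe_sup_eq_mul_of_mul_comm h]; rfl
    _ = p ^ (m + n) := by
        rw [card_mul_eq_card_subgroup_mul_card_quotient, ← horbit, hm, hn, pow_add]

theorem IsPGroup.biSup_of_mul_comm {ι : Type*} {p : ℕ} [Fact p.Prime] {H : ι → Subgroup G}
    (hH : ∀ i, IsPGroup p (H i)) (hcomm : ∀ i j, (H i : Set G) * H j = H j * H i)
    (s : Finset ι) : IsPGroup p (⨆ i ∈ s, H i : Subgroup G) := by
  classical
  induction s using Finset.induction_on with
  | empty =>
    rw [show (⨆ i ∈ (∅ : Finset ι), H i) = ⊥ by simp]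
    exact IsPGroup.of_bot
  | insert i s _ ih =>
    rw [Finset.iSup_insert]
    exact (hH i).sup_of_mul_comm ih (coe_biSup_mul_comm hcomm s i).symm

theorem IsPGroup.iSup_of_mul_comm {ι : Type*} [Finite ι] {p : ℕ} [Fact p.Prime]
    {H : ι → Subgroup G} (hH : ∀ i, IsPGroup p (H i))
    (hcomm : ∀ i j, (H i : Set G) * H j = H j * H i) : IsPGroup p (⨆ i, H i : Subgroup G) := by
  cases nonempty_fintype ι
  have h := IsPGroup.biSup_of_mul_comm hH hcomm Finset.univ
  rwa [show (⨆ i ∈ Finset.univ, H i) = ⨆ i, H i by simp] at h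

end Permutable

section Conjugate

variable {G : Type*} [Group G]

lemma conjS_eq_smul (x : G) (H : Subgroup G) : conjS x H = MulAut.conj x⁻¹ • H := rfl

lemma mem_conjS {x g : G} {H : Subgroup G} : g ∈ conjS x H ↔ x * g * x⁻¹ ∈ H := by
  simp [conjS_eq_smul, Subgroup.mem_pointwise_smul_iff_inv_smul_mem]

lemma conjS_conjS (a b : G) (H : Subgroup G) : conjS a (conjS b H) = conjS (b * a) H := by
  simp only [conjS_eq_smul, smul_smul, mul_inv_rev, map_mul]

lemma conjS_one (H : Subgroup G) : conjS 1 H = H := by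
  simp [conjS_eq_smul]

lemma conjS_le {x : G} {H K : Subgroup G} (hH : H ≤ K) (hx : x ∈ K) : conjS x H ≤ K := by
  intro g hg
  simpa [mul_assoc] using mul_mem (mul_mem (inv_mem hx) (hH (mem_conjS.1 hg))) hx

lemma IsPGroup.conjS {p : ℕ} {H : Subgroup G} (hH : IsPGroup p H) (x : G) :
    IsPGroup p (conjS x H) :=
  hH.map _

lemma isPGroup_zpowers_conj {p : ℕ} {t : G} (ht : IsPGroup p (zpowers t)) (g : G) :
    IsPGroup p (zpowers (g⁻¹ * t * g)) :=
  (ht.conjS g).to_le (zpowers_le.2 (mem_conjS.2 (by simp [mul_assoc])))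

lemma isRCP_bot (R : Set G) : IsRCP R (⊥ : Subgroup G) := by
  intro x _
  rw [conjS_eq_smul, Subgroup.smul_bot]

lemma IsRCP.conjS_mul_conjS_comm {K H : Subgroup G} (hH : IsRCP (K : Set G) H) {a b : G}
    (ha : a ∈ K) (hb : b ∈ K) :
    (conjS a H : Set G) * conjS b H = (conjS b H : Set G) * conjS a H := by
  have h := congrArg (MulAut.conj a⁻¹ • ·) (hH (b * a⁻¹) (mul_mem hb (inv_mem ha)))
  simpa only [MulDistribMulAction.smul_mul, ← coe_pointwise_smul, ← conjS_eq_smul, conjS_conjS,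
    inv_mul_cancel_right] using h

lemma conjS_iSup {ι : Sort*} (x : G) (H : ι → Subgroup G) :
    conjS x (⨆ i, H i) = ⨆ i, conjS x (H i) :=
  Subgroup.map_iSup _ _

lemma conjS_iSup_conjS_le {K H : Subgroup G} {r : G} (hr : r ∈ K) :
    conjS r (⨆ k : K, conjS (k : G) H) ≤ ⨆ k : K, conjS (k : G) H := by
  rw [conjS_iSup]
  refine iSup_le fun k => ?_
  rw [conjS_conjS]
  exact le_iSup_of_le ⟨k * r, mul_mem k.2 hr⟩ le_rfl

end Conjugate

section ConjugatePermutable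

variable {G : Type*} [Group G] [Finite G]

theorem subgroupOf_le_sylow_of_isRCP {p : ℕ} [Fact p.Prime] {K H : Subgroup G} (hHK : H ≤ K)
    (hH : IsPGroup p H) (hRCP : IsRCP (K : Set G) H) (Q : Sylow p K) : H.subgroupOf K ≤ Q := by
  set N := ⨆ k : K, conjS (k : G) H
  have hNK : N ≤ K := iSup_le fun k => conjS_le hHK k.2
  have hN : IsPGroup p N :=
    IsPGroup.iSup_of_mul_comm (fun k => hH.conjS (k : G)) fun a b =>
      hRCP.conjS_mul_conjS_comm a.2 b.2
  have hHN : H ≤ N := by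
    simpa only [OneMemClass.coe_one, conjS_one] using le_iSup (fun k : K => conjS (k : G) H) 1
  have : (N.subgroupOf K).Normal := (normal_subgroupOf_iff hNK).2 fun n k hn hk =>
    conjS_iSup_conjS_le (inv_mem hk) (mem_conjS.2 (by simpa [mul_assoc] using hn))
  have hN' : IsPGroup p (N.subgroupOf K) := hN.comap_subtype
  exact (subgroupOf_mono K hHN).trans (hN'.le_sylow_of_normal Q)

theorem isNilpotent_of_forall_isRCP_zpowers {K : Subgroup G}
    (h : ∀ p : ℕ, p.Prime → ∀ x ∈ K, IsPGroup p (zpowers x) → IsRCP (K : Set G) (zpowers x)) :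
    Group.IsNilpotent K := by
  refine (Group.isNilpotent_of_finite_tfae.out 3 0).mp ?_
  intro p _ Q
  have hle : ∀ Q' : Sylow p K, (Q' : Subgroup K) ≤ Q := by
    intro Q' y hy
    have hy' : IsPGroup p (zpowers (y : G)) := by
      have h := (Q'.isPGroup'.to_le (zpowers_le.2 hy)).map K.subtype
      rwa [MonoidHom.map_zpowers] at h
    exact subgroupOf_le_sylow_of_isRCP (zpowers_le.2 y.2) hy' (h p Fact.out y y.2 hy') Q
      (mem_subgroupOf.2 (mem_zpowers _))
  have heq : ∀ Q' : Sylow p K, Q' = Q := fun Q' =>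
    Sylow.ext (Q'.is_maximal' Q.isPGroup' (hle Q')).symm
  have : Subsingleton (Sylow p K) := ⟨fun Q₁ Q₂ => (heq Q₁).trans (heq Q₂).symm⟩
  exact Sylow.normal_of_subsingleton Q

lemma isRCP_zpowers_of_forall_isCyclic {R : Set G}
    (h : ∀ H : Subgroup G, IsCyclic H → IsPrimePow (Nat.card H) → IsRCP R H) {p : ℕ}
    (hp : p.Prime) {x : G} (hx : IsPGroup p (zpowers x)) : IsRCP R (zpowers x) := by
  have : Fact p.Prime := ⟨hp⟩
  obtain ⟨k, hk⟩ := IsPGroup.iff_card.1 hx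
  rcases Nat.eq_zero_or_pos k with rfl | hk0
  · rw [pow_zero, Nat.card_zpowers, orderOf_eq_one_iff] at hk
    rw [hk, zpowers_one_eq_bot]
    exact isRCP_bot R
  · exact h _ inferInstance ⟨p, k, hp.prime, hk0, hk.symm⟩

end ConjugatePermutable

section GeneralizedFitting

lemma IsMinimalNormal.map_equiv {G H : Type*} [Group G] [Group H] {N : Subgroup G}
    (hN : IsMinimalNormal N) (e : G ≃* H) : IsMinimalNormal (N.map e.toMonoidHom) := by
  obtain ⟨hnorm, hne, hmin⟩ := hN
  refine ⟨hnorm.map _ e.surjective, ?_, fun L hL hle => ?_⟩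
  · rwa [Ne, map_eq_bot_iff_of_injective _ e.injective]
  · have hLN : L.comap e.toMonoidHom ≤ N :=
      (comap_mono hle).trans (comap_map_eq_self_of_injective (f := e.toMonoidHom) e.injective N).le
    rw [← map_comap_eq_self_of_surjective (f := e.toMonoidHom) e.surjective L]
    rcases hmin _ (hL.comap _) hLN with h | h
    · exact Or.inl (by rw [h, Subgroup.map_bot])
    · exact Or.inr (by rw [h])

instance socle'_characteristic (G : Type*) [Group G] : (socle' G).Characteristic := by
  refine characteristic_iff_map_le.2 fun φ => ?_
  rw [socle', (gc_map_comap _).l_sSup]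
  exact iSup₂_le fun N hN => le_sSup (hN.map_equiv φ)

lemma socle'_ne_bot (G : Type*) [Group G] [Finite G] [Nontrivial G] : socle' G ≠ ⊥ := by
  obtain ⟨N, hN⟩ := exists_minimal_of_wellFoundedLT (fun N : Subgroup G => N.Normal ∧ N ≠ ⊥)
    ⟨⊤, inferInstance, top_ne_bot⟩
  have hmin : IsMinimalNormal N := ⟨hN.1.1, hN.1.2, fun K hK hKN =>
    or_iff_not_imp_left.2 fun hK' => le_antisymm hKN (hN.2 ⟨hK, hK'⟩ hKN)⟩
  exact ne_bot_of_le_ne_bot hN.1.2 (le_sSup hmin)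

variable {G : Type*} [Group G]

lemma le_Fitting_of_isNilpotent {N : Subgroup G} (hN : N.Normal)
    (hnil : Group.IsNilpotent N) : N ≤ Fitting G :=
  le_sSup ⟨hN, hnil⟩

instance FStar_normal : (FStar G).Normal := by
  have : ((centralizer (Fitting G : Set G) ⊔ Fitting G).map
      (QuotientGroup.mk' (Fitting G))).Normal :=
    Normal.map inferInstance _ (QuotientGroup.mk'_surjective _)
  exact Normal.comap inferInstance _

lemma Fitting_le_FStar : Fitting G ≤ FStar G := fun g hg => by
  have hg1 : QuotientGroup.mk' (Fitting G) g = 1 := (QuotientGroup.eq_one_iff g).2 hg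
  rw [FStar, mem_comap, hg1]
  exact one_mem _

variable [Finite G]

lemma centralizer_Fitting_le_of_FStar_le (h : FStar G ≤ Fitting G) :
    centralizer (Fitting G : Set G) ≤ Fitting G := by
  set S := (centralizer (Fitting G : Set G) ⊔ Fitting G).map (QuotientGroup.mk' (Fitting G))
  have hsoc : (socle' S).map S.subtype = ⊥ := by
    rw [← map_comap_eq_self_of_surjective (QuotientGroup.mk'_surjective (Fitting G))
      ((socle' S).map S.subtype), eq_bot_iff]
    calc _ = (FStar G).map (QuotientGroup.mk' (Fitting G)) := rfl
      _ ≤ (Fitting G).map (QuotientGroup.mk' (Fitting G)) := map_mono h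
      _ = ⊥ := by rw [Subgroup.map_eq_bot_iff, QuotientGroup.ker_mk']
  have : Subsingleton S := by
    by_contra hS
    rw [not_subsingleton_iff_nontrivial] at hS
    exact socle'_ne_bot S ((map_eq_bot_iff_of_injective _ S.subtype_injective).1 hsoc)
  have hS := eq_bot_of_subsingleton S
  rw [Subgroup.map_eq_bot_iff, QuotientGroup.ker_mk'] at hS
  exact le_sup_left.trans hS

end GeneralizedFitting

section PrimaryElements

variable {G : Type*} [Group G]

lemma mem_of_pow_mem_of_coprime {S : Subgroup G} {g : G} {m n : ℕ} (hmn : m.Coprime n)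
    (hm : g ^ m ∈ S) (hn : g ^ n ∈ S) : g ∈ S := by
  have h := Nat.gcd_eq_gcd_ab m n
  rw [hmn.gcd_eq_one, Nat.cast_one] at h
  have hg : g = (g ^ m) ^ m.gcdA n * (g ^ n) ^ m.gcdB n := by
    rw [← zpow_natCast, ← zpow_natCast, ← zpow_mul, ← zpow_mul, ← zpow_add, ← h, zpow_one]
  rw [hg]
  exact mul_mem (zpow_mem hm _) (zpow_mem hn _)

lemma orderOf_pow_ordProj {p : ℕ} (hp : p.Prime) (g : G) :
    orderOf (g ^ ordProj[p] (orderOf g)) = ordCompl[p] (orderOf g) :=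
  orderOf_pow_of_dvd (pow_ne_zero _ hp.ne_zero) (Nat.ordProj_dvd _ _)

lemma isPGroup_zpowers_pow_ordCompl (p : ℕ) (g : G) :
    IsPGroup p (zpowers (g ^ ordCompl[p] (orderOf g))) := by
  refine IsPGroup.of_card_dvd_pow (n := (orderOf g).factorization p) ?_
  rw [Nat.card_zpowers]
  apply orderOf_dvd_of_pow_eq_one
  rw [← pow_mul, mul_comm, Nat.ordProj_mul_ordCompl_eq_self, pow_orderOf_eq_one]

lemma eq_one_of_isPGroup_zpowers_of_not_dvd {p : ℕ} [Fact p.Prime] {y z : G}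
    (hy : y ∈ zpowers z) (hp : IsPGroup p (zpowers y)) (hz : ¬ p ∣ orderOf z) : y = 1 := by
  by_contra hy1
  have hpy : p ∣ orderOf y := by
    simpa [Subgroup.orderOf_mk] using
      hp.dvd_orderOf (g := ⟨y, mem_zpowers y⟩) (by simpa [Subtype.ext_iff] using hy1)
  exact hz (hpy.trans (orderOf_dvd_of_mem_zpowers hy))

variable [Finite G]

theorem mem_of_forall_isPGroup_zpowers_mem {S : Subgroup G} {g : G}
    (h : ∀ p : ℕ, p.Prime → ∀ y ∈ zpowers g, IsPGroup p (zpowers y) → y ∈ S) : g ∈ S := by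
  induction hn : orderOf g using Nat.strong_induction_on generalizing g with
  | _ n ih =>
    rcases eq_or_ne n 1 with rfl | hn1
    · rw [orderOf_eq_one_iff.1 hn]
      exact one_mem S
    obtain ⟨p, hp, hpn⟩ := Nat.exists_prime_and_dvd hn1
    have hn0 : n ≠ 0 := hn ▸ (orderOf_pos g).ne'
    have hlt : ordCompl[p] n < n := (Nat.ordCompl_le n p).lt_of_ne fun heq =>
      ((Nat.ordCompl_eq_self_iff_zero_or_not_dvd n hp).1 heq).elim hn0 (· hpn)
    subst hn
    refine mem_of_pow_mem_of_coprime ((Nat.coprime_ordCompl hp hn0).pow_left _).symm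
      (h p hp _ (npow_mem_zpowers _ _) (isPGroup_zpowers_pow_ordCompl p g))
      (ih _ hlt (fun q hq y hy => h q hq y (zpowers_le.2 (npow_mem_zpowers _ _) hy))
        (orderOf_pow_ordProj hp g))

end PrimaryElements

section Commute

variable {G : Type*} [Group G] [Finite G]

lemma isPGroup_zpowers_mul_of_isNilpotent {p : ℕ} [Fact p.Prime] {F : Subgroup G}
    [Group.IsNilpotent F] {a b : G} (ha : a ∈ F) (hb : b ∈ F) (hpa : IsPGroup p (zpowers a))
    (hpb : IsPGroup p (zpowers b)) : IsPGroup p (zpowers (a * b)) := by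
  obtain ⟨P⟩ : Nonempty (Sylow p F) := inferInstance
  have hmem : ∀ x ∈ F, IsPGroup p (zpowers x) → x ∈ (P : Subgroup F).map F.subtype := by
    intro x hx hpx
    have hpx' : IsPGroup p ((zpowers x).subgroupOf F) := hpx.comap_subtype
    obtain ⟨Q, hQ⟩ := hpx'.exists_le_sylow
    exact ⟨⟨x, hx⟩,
      (hQ.trans (Q.isPGroup'.le_sylow_of_normal P)) (mem_subgroupOf.2 (mem_zpowers x)), rfl⟩
  exact (P.isPGroup'.map F.subtype).to_le (zpowers_le.2 (mul_mem (hmem a ha hpa) (hmem b hb hpb)))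

theorem commute_of_mul_conjS_comm {F : Subgroup G} [F.Normal] [Group.IsNilpotent F] {p q : ℕ}
    [Fact p.Prime] [Fact q.Prime] (hpq : p ≠ q) {x f : G} (hx : IsPGroup p (zpowers x))
    (hf : f ∈ F) (hfq : IsPGroup q (zpowers f))
    (hperm : (zpowers x : Set G) * conjS f (zpowers x) = conjS f (zpowers x) * zpowers x) :
    Commute x f := by
  have hcp : IsPGroup p (zpowers (x⁻¹ * f⁻¹ * x * f)) := by
    refine (hx.sup_of_mul_comm (hx.conjS f) hperm).to_le (zpowers_le.2 ?_)
    rw [show x⁻¹ * f⁻¹ * x * f = x⁻¹ * (f⁻¹ * x * f) by group]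
    exact mul_mem (mem_sup_left (inv_mem (mem_zpowers x)))
      (mem_sup_right (mem_conjS.2 (by simp [mul_assoc])))
  have hcq : IsPGroup q (zpowers (x⁻¹ * f⁻¹ * x * f)) := by
    have hF : x⁻¹ * f⁻¹ * x ∈ F := by
      simpa using Normal.conj_mem inferInstance f⁻¹ (inv_mem hf) x⁻¹
    have hq : IsPGroup q (zpowers (x⁻¹ * f⁻¹ * x)) :=
      (hfq.conjS x).to_le (zpowers_le.2 (mem_conjS.2 (by simp [mul_assoc])))
    exact isPGroup_zpowers_mul_of_isNilpotent hF hf hq hfq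
  have hc : x⁻¹ * f⁻¹ * x * f = 1 :=
    zpowers_eq_bot.1 (disjoint_self.1 (IsPGroup.disjoint_of_ne p q hpq _ _ hcp hcq))
  calc x * f = f * x * (x⁻¹ * f⁻¹ * x * f) := by group
    _ = f * x := by rw [hc, mul_one]

end Commute

section CoprimeCentralizer

variable {G : Type*} [Group G]

/-- When `F` is nilpotent, these elements generate `O_{q'}(F)`. -/
def primaryAwayFrom (F : Subgroup G) (q : ℕ) : Set G :=
  {t | t ∈ F ∧ ∃ r : ℕ, r.Prime ∧ r ≠ q ∧ IsPGroup r (zpowers t)}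

instance normal_centralizer_primaryAwayFrom (F : Subgroup G) [F.Normal] (q : ℕ) :
    (centralizer (primaryAwayFrom F q)).Normal where
  conj_mem n hn g := mem_centralizer_iff.2 fun t ⟨htF, r, hr, hrq, ht⟩ => by
    have hconj : g⁻¹ * t * g ∈ primaryAwayFrom F q :=
      ⟨by simpa using Normal.conj_mem inferInstance t htF g⁻¹, r, hr, hrq,
        isPGroup_zpowers_conj ht g⟩
    have hcomm := mem_centralizer_iff.1 hn _ hconj
    calc t * (g * n * g⁻¹) = g * (g⁻¹ * t * g * n) * g⁻¹ := by group
      _ = g * (n * (g⁻¹ * t * g)) * g⁻¹ := by rw [hcomm]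
      _ = g * n * g⁻¹ * t := by group

variable [Finite G] {F : Subgroup G} {q : ℕ}

lemma mem_centralizer_centralizer_primaryAwayFrom (hC : centralizer (F : Set G) ≤ F)
    (hcomm : ∀ p r : ℕ, p.Prime → r.Prime → p ≠ r → ∀ x f : G,
      IsPGroup p (zpowers x) → f ∈ F → IsPGroup r (zpowers f) → Commute x f)
    {r : ℕ} (hr : r.Prime) (hrq : r ≠ q) {y : G}
    (hyX : y ∈ centralizer (primaryAwayFrom F q)) (hy : IsPGroup r (zpowers y)) :
    y ∈ centralizer (centralizer (primaryAwayFrom F q) : Set G) := by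
  have hyF : y ∈ centralizer (F : Set G) := mem_centralizer_iff.2 fun f hf => by
    refine mem_centralizer_singleton_iff.1
      (mem_of_forall_isPGroup_zpowers_mem fun s hs w hw hws => ?_)
    have hwF : w ∈ F := zpowers_le.2 hf hw
    rw [mem_centralizer_singleton_iff]
    rcases eq_or_ne s r with rfl | hsr
    · exact mem_centralizer_iff.1 hyX w ⟨hwF, s, hs, hrq, hws⟩
    · exact (hcomm r s hr hs hsr.symm y w hy hwF hws).symm
  have hyT : y ∈ primaryAwayFrom F q := ⟨hC hyF, r, hr, hrq, hy⟩
  exact mem_centralizer_iff.2 fun x hx => (mem_centralizer_iff.1 hx y hyT).symm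

theorem isNilpotent_centralizer_primaryAwayFrom (hC : centralizer (F : Set G) ≤ F)
    (hcomm : ∀ p r : ℕ, p.Prime → r.Prime → p ≠ r → ∀ x f : G,
      IsPGroup p (zpowers x) → f ∈ F → IsPGroup r (zpowers f) → Commute x f)
    (hq : q.Prime) : Group.IsNilpotent (centralizer (primaryAwayFrom F q)) := by
  set X := centralizer (primaryAwayFrom F q)
  have : Fact q.Prime := ⟨hq⟩
  have hcent : ∀ z ∈ X, ¬ q ∣ orderOf z → z ∈ centralizer (X : Set G) := fun z hz hqz =>
    mem_of_forall_isPGroup_zpowers_mem fun r hr y hy hry => by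
      rcases eq_or_ne r q with rfl | hrq
      · rw [eq_one_of_isPGroup_zpowers_of_not_dvd hy hry hqz]
        exact one_mem _
      · exact mem_centralizer_centralizer_primaryAwayFrom hC hcomm hr hrq
          (zpowers_le.2 hz hy) hry
  -- `X / Z(X)` is a `q`-group: the `q'`-part `z ^ ordProj[q] (orderOf z)` of `z ∈ X` is central.
  refine Group.of_quotient_center_nilpotent (IsPGroup.isNilpotent (p := q) fun z => ?_)
  induction z using QuotientGroup.induction_on with
  | H z =>
    refine ⟨(orderOf (z : G)).factorization q, ?_⟩
    rw [← QuotientGroup.mk_pow, QuotientGroup.eq_one_iff, mem_center_iff]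
    have hqz : ¬ q ∣ orderOf ((z : G) ^ ordProj[q] (orderOf (z : G))) := by
      rw [orderOf_pow_ordProj hq]
      exact Nat.not_dvd_ordCompl hq (orderOf_pos _).ne'
    intro w
    exact Subtype.ext (mem_centralizer_iff.1 (hcent _ (pow_mem z.2 _) hqz) w w.2)

theorem mem_Fitting_of_isPGroup_zpowers [F.Normal] (hC : centralizer (F : Set G) ≤ F)
    (hcomm : ∀ p r : ℕ, p.Prime → r.Prime → p ≠ r → ∀ x f : G,
      IsPGroup p (zpowers x) → f ∈ F → IsPGroup r (zpowers f) → Commute x f)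
    (hq : q.Prime) {x : G} (hx : IsPGroup q (zpowers x)) : x ∈ Fitting G := by
  refine le_Fitting_of_isNilpotent inferInstance
    (isNilpotent_centralizer_primaryAwayFrom hC hcomm hq)
    (mem_centralizer_iff.2 fun t ⟨htF, r, hr, hrq, ht⟩ => ?_)
  exact (hcomm q r hq hr hrq.symm x t hx htF ht).symm

end CoprimeCentralizer

theorem nilpotent_of_cyclic_primary_fstar_conjugate_permutable
    (G : Type*) [Group G] [Finite G]
    (h : ∀ H : Subgroup G, IsCyclic ↥H → IsPrimePow (Nat.card ↥H) →
      IsRCP (FStar G : Set G) H) :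
    Group.IsNilpotent G := by
  have hRCP : ∀ p : ℕ, p.Prime → ∀ x : G, IsPGroup p (zpowers x) →
      IsRCP (FStar G : Set G) (zpowers x) :=
    fun p hp x hx => isRCP_zpowers_of_forall_isCyclic h hp hx
  have hnil : Group.IsNilpotent (FStar G) :=
    isNilpotent_of_forall_isRCP_zpowers fun p hp x _ hx => hRCP p hp x hx
  have hF : FStar G = Fitting G :=
    le_antisymm (le_Fitting_of_isNilpotent inferInstance hnil) Fitting_le_FStar
  have : Group.IsNilpotent (Fitting G) := hF ▸ hnil
  have hcomm : ∀ p r : ℕ, p.Prime → r.Prime → p ≠ r → ∀ x f : G, IsPGroup p (zpowers x) →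
      f ∈ Fitting G → IsPGroup r (zpowers f) → Commute x f := by
    intro p r hp hr hpr x f hx hf hfr
    have : Fact p.Prime := ⟨hp⟩
    have : Fact r.Prime := ⟨hr⟩
    exact commute_of_mul_conjS_comm hpr hx hf hfr (hRCP p hp x hx f (hF ▸ hf))
  have htop : Fitting G = ⊤ := eq_top_iff.2 fun g _ =>
    mem_of_forall_isPGroup_zpowers_mem fun p hp y _ hy =>
      mem_Fitting_of_isPGroup_zpowers (centralizer_Fitting_le_of_FStar_le hF.le) hcomm hp hy
  exact Group.nilpotent_of_mulEquiv ((MulEquiv.subgroupCongr htop).trans topEquiv)
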